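/- arXiv:1211.6780 — 2 statements merged into one kernel-verified Lean document; each statement's English description precedes it below -/
import Mathlib

section
/- Let p_1,…,p_2n : [0,T) → ℝ² be a solution of the planar point-vortex gradient flow. Then the function t ↦ Σ_{1 ≤ i < j ≤ 2n} |P_i(t) − P_j(t)|² is differentiable on (0,T) with derivative −2|V₀(0)|² e^{2t}. In particular this sum of squared mutual chordal distances is nonincreasing on [0,T), and it is strictly decreasing if V₀(0) ≠ 0. -/
open Finset

noncomputable section

abbrev E2 := EuclideanSpace ℝ (Fin 2)
abbrev E3 := EuclideanSpace ℝ (Fin 3)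

/-- Velocity field of the planar point-vortex gradient flow. -/
def pvVel {N : ℕ} (d : Fin N → ℤ) (q : Fin N → E2) (i : Fin N) : E2 :=
  ((1 + ‖q i‖ ^ 2) ^ 2 / 2) •
    ((1 + ‖q i‖ ^ 2)⁻¹ • q i +
      (d i : ℝ) • ∑ j ∈ univ.erase i, (d j : ℝ) • (‖q i - q j‖ ^ 2)⁻¹ • (q i - q j))

/-- Inverse stereographic projection: the sphere point corresponding to `p ∈ ℝ²`. -/
def sph (p : E2) : E3 :=
  (WithLp.equiv 2 (Fin 3 → ℝ)).symm
    ![2 * p 0 / (1 + ‖p‖ ^ 2), 2 * p 1 / (1 + ‖p‖ ^ 2), (‖p‖ ^ 2 - 1) / (1 + ‖p‖ ^ 2)]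

/-! The points `P i = sph (p i)` lie on the unit sphere, so
`∑_{i<j} ‖P i - P j‖² = (2n)² - ‖V₀‖²` with `V₀ = ∑ i, P i`. Pushed to the sphere, the velocity
of a vortex splits into a self term, contributing `P i - (p i, -1)`, and pair interactions; since
`d i = ±1` and `∑ i, d i = 0`, the interactions cancel in pairs down to `∑ i, (p i, -1)`. Here
`(p i, -1)` is `planeIncl (p i) - northPole`. Hence `V₀' = V₀`, so `V₀ t = eᵗ V₀ 0` and the sum of
squared chordal distances is `(2n)² - e^{2t} ‖V₀ 0‖²`. -/

def northPole : E3 := !₂[0, 0, 1]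

def planeIncl : E2 →L[ℝ] E3 :=
  LinearMap.toContinuousLinearMap
    { toFun := fun w => !₂[w 0, w 1, 0]
      map_add' := fun v w => by ext k; fin_cases k <;> simp
      map_smul' := fun c w => by ext k; fin_cases k <;> simp }

lemma planeIncl_apply (w : E2) : planeIncl w = !₂[w 0, w 1, 0] := rfl

lemma sph_eq (a : E2) :
    sph a = northPole + (2 / (1 + ‖a‖ ^ 2)) • (planeIncl a - northPole) := by
  have hu : 1 + ‖a‖ ^ 2 ≠ 0 := by positivity
  ext k; fin_cases k <;> simp [sph, planeIncl_apply, northPole] <;> field_simp; ring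

lemma norm_sph (a : E2) : ‖sph a‖ = 1 := by
  have hu : 1 + ‖a‖ ^ 2 ≠ 0 := by positivity
  have ha : ‖a‖ ^ 2 = a 0 ^ 2 + a 1 ^ 2 := by
    simp [EuclideanSpace.norm_sq_eq, Fin.sum_univ_two]
  rw [← pow_eq_one_iff_of_nonneg (norm_nonneg _) two_ne_zero, EuclideanSpace.norm_sq_eq]
  simp [sph, Fin.sum_univ_three]
  field_simp
  linear_combination -4 * ha

/-- `sphPush a w` is the derivative of `sph` at `a` in the direction `((1 + ‖a‖²)² / 2) • w`;
this is the prefactor in `pvVel`. -/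
def sphPush (a : E2) : E2 →L[ℝ] E3 :=
  (1 + ‖a‖ ^ 2) • planeIncl - (2 : ℝ) • (innerSL ℝ a).smulRight (planeIncl a - northPole)

lemma sphPush_apply (a w : E2) :
    sphPush a w = (1 + ‖a‖ ^ 2) • planeIncl w - (2 * inner ℝ a w) • (planeIncl a - northPole) := by
  simp [sphPush, mul_smul]

lemma HasDerivWithinAt.sph_comp {f : ℝ → E2} {w : E2} {s : Set ℝ} {t : ℝ}
    (hf : HasDerivWithinAt f (((1 + ‖f t‖ ^ 2) ^ 2 / 2) • w) s t) :
    HasDerivWithinAt (fun τ => sph (f τ)) (sphPush (f t) w) s t := by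
  have hu : 1 + ‖f t‖ ^ 2 ≠ 0 := by positivity
  have hscale := ((hasDerivWithinAt_const t s (2 : ℝ)).div (hf.norm_sq.const_add 1) hu).fun_smul
    ((planeIncl.hasFDerivAt.comp_hasDerivWithinAt t hf).sub_const northPole)
  rw [show (fun τ => sph (f τ)) = _ from funext fun τ => sph_eq (f τ)]
  refine (hscale.const_add northPole).congr_deriv ?_
  simp only [sphPush_apply, map_smul, inner_smul_right, smul_smul, Pi.div_apply, Function.comp_apply]
  match_scalars <;> field_simp <;> ring

lemma inv_smul_sphPush_self (a : E2) :
    (1 + ‖a‖ ^ 2)⁻¹ • sphPush a a = sph a - (planeIncl a - northPole) := by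
  have hu : 1 + ‖a‖ ^ 2 ≠ 0 := by positivity
  rw [sph_eq, sphPush_apply, real_inner_self_eq_norm_sq]
  match_scalars <;> field_simp <;> ring

lemma sphPush_add_sphPush_swap {a b : E2} (hab : a ≠ b) :
    (‖a - b‖ ^ 2)⁻¹ • sphPush a (a - b) + (‖b - a‖ ^ 2)⁻¹ • sphPush b (b - a) =
      -((planeIncl a - northPole) + (planeIncl b - northPole)) := by
  have hD : ‖a - b‖ ≠ 0 := norm_ne_zero_iff.mpr (sub_ne_zero.mpr hab)
  have hA : ‖a‖ ^ 2 = ‖a - b‖ ^ 2 + 2 * inner ℝ a b - ‖b‖ ^ 2 := by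
    linarith [norm_sub_sq_real a b]
  rw [norm_sub_rev b a]
  simp only [sphPush_apply, map_sub, real_inner_self_eq_norm_sq, real_inner_comm a b]
  match_scalars <;> rw [hA] <;> field_simp <;> ring

section PairSum

variable {ι M : Type*} [Fintype ι] [AddCommGroup M] [Module ℝ M]

lemma sum_sum_mul_smul_add_eq_zero {c : ι → ℝ} (hsum : ∑ i, c i = 0) (e : ι → M) :
    ∑ i, ∑ j, (c i * c j) • (e i + e j) = 0 := by
  simp only [smul_add, sum_add_distrib]
  rw [sum_comm (f := fun i j => (c i * c j) • e j)]
  simp only [← sum_smul, ← mul_sum, ← sum_mul, hsum, mul_zero, zero_mul, zero_smul, sum_const_zero,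
    add_zero]

theorem sum_smul_sum_erase_smul_eq_sum [DecidableEq ι] {c : ι → ℝ} (hc : ∀ i, c i ^ 2 = 1)
    (hsum : ∑ i, c i = 0) (F : ι → ι → M) (e : ι → M)
    (hF : ∀ i j, i ≠ j → F i j + F j i = -(e i + e j)) :
    ∑ i, c i • ∑ j ∈ univ.erase i, c j • F i j = ∑ i, e i := by
  -- With the diagonal filled in by `-e i` the pair relation holds for all `i, j`,
  -- so the full weighted double sum vanishes.
  set G : ι → ι → M := fun i j => if i = j then -e i else F i j
  have hG : ∀ i j, G i j + G j i = -(e i + e j) := by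
    intro i j
    by_cases h : i = j
    · subst h; simp only [G, if_pos rfl]; abel
    · simp only [G, if_neg h, if_neg (Ne.symm h), hF i j h]
  have hrow : ∀ i, c i • ∑ j ∈ univ.erase i, c j • F i j = ∑ j, (c i * c j) • G i j + e i := by
    intro i
    rw [← sum_erase_add _ _ (mem_univ i), smul_sum]
    simp only [G, if_pos rfl, ← sq, hc, one_smul, neg_add_cancel_right, smul_smul]
    exact sum_congr rfl fun j hj => by rw [if_neg (ne_of_mem_erase hj).symm]
  have hzero : ∑ i, ∑ j, (c i * c j) • G i j = 0 := by
    have h2 : (2 : ℝ) • ∑ i, ∑ j, (c i * c j) • G i j = -∑ i, ∑ j, (c i * c j) • (e i + e j) := by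
      rw [two_smul]
      nth_rewrite 2 [sum_comm]
      simp only [← sum_add_distrib, ← sum_neg_distrib, mul_comm (c _) (c _), ← smul_add,
        ← smul_neg, hG]
    rwa [sum_sum_mul_smul_add_eq_zero hsum, neg_zero, smul_eq_zero, or_iff_right two_ne_zero]
      at h2
  rw [sum_congr rfl fun i _ => hrow i, sum_add_distrib, hzero, zero_add]

end PairSum

theorem Convex.eq_exp_smul_of_hasDerivWithinAt_self {E : Type*} [NormedAddCommGroup E]
    [NormedSpace ℝ E] {g : ℝ → E} {s : Set ℝ} (hs : Convex ℝ s)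
    (hg : ∀ t ∈ s, HasDerivWithinAt g (g t) s t) {t₀ t : ℝ} (ht₀ : t₀ ∈ s) (ht : t ∈ s) :
    g t = Real.exp (t - t₀) • g t₀ := by
  have hconst : ∀ τ ∈ s, HasDerivWithinAt (fun τ => Real.exp (-τ) • g τ) 0 s τ := by
    intro τ hτ
    refine (((Real.hasDerivAt_exp (-τ)).comp τ (hasDerivAt_neg τ)).hasDerivWithinAt.fun_smul
      (hg τ hτ)).congr_deriv ?_
    simp only [Function.comp_apply]
    module
  have h := hs.norm_image_sub_le_of_norm_hasDerivWithin_le hconst (fun _ _ => norm_zero.le) ht₀ ht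
  rw [zero_mul, norm_le_zero_iff, sub_eq_zero] at h
  rw [← smul_right_inj (Real.exp_pos (-t)).ne', h, smul_smul, ← Real.exp_add]
  congr 2
  ring

section ChordalSum

variable {ι : Type*} [Fintype ι] [LinearOrder ι]

lemma two_mul_sum_sum_filter_lt {f : ι → ι → ℝ} (hsymm : ∀ i j, f i j = f j i)
    (hdiag : ∀ i, f i i = 0) :
    2 * ∑ i, ∑ j ∈ univ.filter (fun j => i < j), f i j = ∑ i, ∑ j, f i j := by
  have hsplit : ∀ i j, f i j = (if i < j then f i j else 0) + (if j < i then f j i else 0) := by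
    intro i j
    rcases lt_trichotomy i j with h | rfl | h
    · simp [h, h.not_gt]
    · simp [hdiag]
    · simp [h, h.not_gt, hsymm i j]
  simp only [sum_filter]
  conv_rhs => rw [sum_congr rfl fun i _ => sum_congr rfl fun j _ => hsplit i j]
  simp only [sum_add_distrib]
  rw [sum_comm (f := fun i j => if j < i then f j i else 0)]
  ring

theorem sum_sum_filter_lt_norm_sub_sq_of_norm_eq_one {E : Type*} [NormedAddCommGroup E]
    [InnerProductSpace ℝ E] {P : ι → E} (hP : ∀ i, ‖P i‖ = 1) :
    ∑ i, ∑ j ∈ univ.filter (fun j => i < j), ‖P i - P j‖ ^ 2 =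
      (Fintype.card ι : ℝ) ^ 2 - ‖∑ i, P i‖ ^ 2 := by
  have hpair : ∀ i j, ‖P i - P j‖ ^ 2 = 2 - 2 * inner ℝ (P i) (P j) := fun i j => by
    rw [norm_sub_sq_real, hP, hP]; ring
  have hsq : ‖∑ i, P i‖ ^ 2 = ∑ i, ∑ j, inner ℝ (P i) (P j) := by
    rw [← real_inner_self_eq_norm_sq, sum_inner]; simp only [inner_sum]
  have h2 := two_mul_sum_sum_filter_lt (f := fun i j => ‖P i - P j‖ ^ 2)
    (fun i j => by rw [norm_sub_rev]) (fun i => by simp)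
  have hfull : ∑ i, ∑ j, ‖P i - P j‖ ^ 2 = 2 * (Fintype.card ι : ℝ) ^ 2 - 2 * ‖∑ i, P i‖ ^ 2 := by
    simp only [hpair, sum_sub_distrib, ← mul_sum, sum_const, card_univ, nsmul_eq_mul, hsq]
    ring
  linarith

end ChordalSum

theorem hasDerivWithinAt_sum_sph {N : ℕ} {s : Set ℝ} {t : ℝ} {p : Fin N → ℝ → E2}
    {d : Fin N → ℤ} (hd : ∀ i, (d i : ℝ) ^ 2 = 1) (hdsum : ∑ i, (d i : ℝ) = 0)
    (hdist : ∀ i j, i ≠ j → p i t ≠ p j t)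
    (hode : ∀ i, HasDerivWithinAt (p i) (pvVel d (fun j => p j t) i) s t) :
    HasDerivWithinAt (fun τ => ∑ i, sph (p i τ)) (∑ i, sph (p i t)) s t := by
  refine (HasDerivWithinAt.fun_sum fun i _ => (hode i).sph_comp).congr_deriv ?_
  simp only [map_add, map_smul, map_sum, inv_smul_sphPush_self, sum_add_distrib]
  rw [sum_smul_sum_erase_smul_eq_sum hd hdsum _ (fun i => planeIncl (p i t) - northPole)
    fun i j hij => sphPush_add_sphPush_swap (hdist i j hij), ← sum_add_distrib]
  simp only [sub_add_cancel]

theorem sum_sq_chordal_eq_of_flow {N : ℕ} {T : ℝ} {p : Fin N → ℝ → E2} {d : Fin N → ℤ}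
    (hd : ∀ i, (d i : ℝ) ^ 2 = 1) (hdsum : ∑ i, (d i : ℝ) = 0)
    (hdist : ∀ t ∈ Set.Ico (0 : ℝ) T, ∀ i j, i ≠ j → p i t ≠ p j t)
    (hode : ∀ t ∈ Set.Ico (0 : ℝ) T, ∀ i,
      HasDerivWithinAt (p i) (pvVel d (fun j => p j t) i) (Set.Ico (0 : ℝ) T) t)
    {t : ℝ} (ht : t ∈ Set.Ico 0 T) :
    ∑ i, ∑ j ∈ univ.filter (fun j => i < j), ‖sph (p i t) - sph (p j t)‖ ^ 2 =
      (N : ℝ) ^ 2 - ‖∑ i, sph (p i 0)‖ ^ 2 * Real.exp (2 * t) := by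
  have hV := (convex_Ico 0 T).eq_exp_smul_of_hasDerivWithinAt_self
    (fun τ hτ => hasDerivWithinAt_sum_sph hd hdsum (hdist τ hτ) (hode τ hτ))
    ⟨le_rfl, ht.1.trans_lt ht.2⟩ ht
  rw [sum_sum_filter_lt_norm_sub_sq_of_norm_eq_one fun i => norm_sph _, hV, norm_smul,
    Fintype.card_fin, Real.norm_of_nonneg (Real.exp_pos _).le, mul_pow, ← Real.exp_nat_mul,
    sub_zero]
  ring_nf

theorem sum_sq_chordal_distances_decay_general
    (n : ℕ) (T : ℝ)
    (p : Fin (2 * n) → ℝ → E2) (d : Fin (2 * n) → ℤ)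
    (hd : ∀ i, d i = 1 ∨ d i = -1) (hdsum : ∑ i, d i = 0)
    (hdist : ∀ t ∈ Set.Ico (0 : ℝ) T, ∀ i j, i ≠ j → p i t ≠ p j t)
    (hode : ∀ t ∈ Set.Ico (0 : ℝ) T, ∀ i,
      HasDerivWithinAt (p i) (pvVel d (fun j => p j t) i) (Set.Ico (0 : ℝ) T) t) :
    (∀ t ∈ Set.Ioo (0 : ℝ) T,
      HasDerivAt (fun s => ∑ i, ∑ j ∈ univ.filter (fun j => i < j),
          ‖sph (p i s) - sph (p j s)‖ ^ 2)
        (-2 * ‖∑ i, sph (p i 0)‖ ^ 2 * Real.exp (2 * t)) t) ∧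
    AntitoneOn (fun s => ∑ i, ∑ j ∈ univ.filter (fun j => i < j),
        ‖sph (p i s) - sph (p j s)‖ ^ 2) (Set.Ico (0 : ℝ) T) ∧
    ((∑ i, sph (p i 0)) ≠ 0 →
      StrictAntiOn (fun s => ∑ i, ∑ j ∈ univ.filter (fun j => i < j),
          ‖sph (p i s) - sph (p j s)‖ ^ 2) (Set.Ico (0 : ℝ) T)) := by
  have hd' : ∀ i, (d i : ℝ) ^ 2 = 1 := fun i => by rcases hd i with h | h <;> simp [h]
  have hdsum' : ∑ i, (d i : ℝ) = 0 := by exact_mod_cast hdsum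
  set c := ‖∑ i, sph (p i 0)‖ ^ 2
  set φ : ℝ → ℝ := fun s => ((2 * n : ℕ) : ℝ) ^ 2 - c * Real.exp (2 * s)
  have hchordal : Set.EqOn φ (fun s => ∑ i, ∑ j ∈ univ.filter (fun j => i < j),
      ‖sph (p i s) - sph (p j s)‖ ^ 2) (Set.Ico 0 T) := fun t ht =>
    (sum_sq_chordal_eq_of_flow hd' hdsum' hdist hode ht).symm
  refine ⟨fun t ht => ?_, ?_, fun hV₀ => ?_⟩
  · have hφ : HasDerivAt φ (-2 * c * Real.exp (2 * t)) t :=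
      ((((hasDerivAt_id t).const_mul 2).exp.const_mul c).const_sub _).congr_deriv (by simp only [id, mul_one]; ring)
    exact hφ.congr_of_eventuallyEq <| Filter.eventuallyEq_of_mem (Ioo_mem_nhds ht.1 ht.2)
      fun s hs => (hchordal (Set.Ioo_subset_Ico_self hs)).symm
  · refine AntitoneOn.congr (fun a _ b _ hab => ?_) hchordal
    simp only [φ]
    gcongr
  · have hc : 0 < c := by positivity
    refine StrictAntiOn.congr (fun a _ b _ hab => ?_) hchordal
    simp only [φ]
    gcongr

/-- Along the planar point-vortex gradient flow, the sum of squared mutual chordal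
distances of the sphere points is differentiable with derivative `-2‖V₀(0)‖² e^{2t}`;
it is nonincreasing, and strictly decreasing if `V₀(0) ≠ 0`. -/
theorem sum_sq_chordal_distances_decay
    (n : ℕ) (hn : 1 ≤ n) (T : ℝ)
    (p : Fin (2 * n) → ℝ → E2) (d : Fin (2 * n) → ℤ)
    (hd : ∀ i, d i = 1 ∨ d i = -1) (hdsum : ∑ i, d i = 0)
    (hdist : ∀ t ∈ Set.Ico (0 : ℝ) T, ∀ i j, i ≠ j → p i t ≠ p j t)
    (hode : ∀ t ∈ Set.Ico (0 : ℝ) T, ∀ i,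
      HasDerivWithinAt (p i) (pvVel d (fun j => p j t) i) (Set.Ico (0 : ℝ) T) t) :
    (∀ t ∈ Set.Ioo (0 : ℝ) T,
      HasDerivAt (fun s => ∑ i, ∑ j ∈ univ.filter (fun j => i < j),
          ‖sph (p i s) - sph (p j s)‖ ^ 2)
        (-2 * ‖∑ i, sph (p i 0)‖ ^ 2 * Real.exp (2 * t)) t) ∧
    AntitoneOn (fun s => ∑ i, ∑ j ∈ univ.filter (fun j => i < j),
        ‖sph (p i s) - sph (p j s)‖ ^ 2) (Set.Ico (0 : ℝ) T) ∧
    ((∑ i, sph (p i 0)) ≠ 0 →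
      StrictAntiOn (fun s => ∑ i, ∑ j ∈ univ.filter (fun j => i < j),
          ‖sph (p i s) - sph (p j s)‖ ^ 2) (Set.Ico (0 : ℝ) T)) :=
  sum_sq_chordal_distances_decay_general n T p d hd hdsum hdist hode
end
end

section
/- Let p_1,…,p_{2n} : [0,T₁) → ℝ² be a solution of the planar point-vortex gradient flow with T₁ < ∞. Let I ⊆ {1,…,2n} with |I| ≥ 2 be such that p_i(t) → 0 as t → T₁⁻ for every i ∈ I, and suppose there is δ > 0 with |p_j(t)| ≥ δ for all j ∉ I and all t ∈ [0,T₁). Assume the total colliding degree is nonzero: Σ_{i∈I} d_i ≠ 0, write l = |Σ_{i∈I} d_i|, and let k be the number of indices in I whose degree has the minority sign (so I contains k vortices of one sign and k+l of the opposite sign). Then C(k,2) + C(k+l,2) − k(k+l) < 1, where C(a,2) = a(a−1)/2 (with C(0,2) = C(1,2) = 0). In particular, the colliding vortices cannot all have degrees of one sign. -/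
open Finset

noncomputable section

/-!
Let `Q = ∑_{i ∈ I} |p_i|² / (1 + |p_i|²)`, which tends to `0` at the collision. Along the flow
`Q' = Q + ∑_{i ∈ I, j ≠ i} d_i d_j ⟪p_i, p_i - p_j⟫ / |p_i - p_j|²`. The pairs inside `I`
symmetrize to `((∑_{i ∈ I} d_i)² - |I|) / 2`, and the pairs with `j ∉ I` vanish in the limit since
`p_j` stays at distance `δ` from the origin. So if `(∑_{i ∈ I} d_i)² > |I|`, the nonnegative
function `Q` would be strictly increasing just before `T₁` while tending to `0`. Hence
`l² ≤ |I| = 2k + l`, which is the binomial inequality and excludes `l = |I| ≥ 2`.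
-/

open Filter Topology
open scoped RealInnerProductSpace

section RadialInteraction

variable {E : Type*} [NormedAddCommGroup E] [InnerProductSpace ℝ E]

def radialInteraction (x y : E) : ℝ := ⟪x, x - y⟫ / ‖x - y‖ ^ 2

theorem radialInteraction_add_radialInteraction {x y : E} (h : x ≠ y) :
    radialInteraction x y + radialInteraction y x = 1 := by
  have hxy : ‖x - y‖ ^ 2 ≠ 0 := pow_ne_zero 2 (norm_ne_zero_iff.2 (sub_ne_zero.2 h))
  rw [radialInteraction, radialInteraction, norm_sub_rev y x, ← neg_sub x y, inner_neg_right,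
    neg_div, ← sub_eq_add_neg, ← sub_div, ← inner_sub_left, real_inner_self_eq_norm_sq,
    div_self hxy]

theorem abs_radialInteraction_le (x y : E) : |radialInteraction x y| ≤ ‖x‖ / ‖x - y‖ := by
  rcases eq_or_ne ‖x - y‖ 0 with h | h
  · simp [radialInteraction, h]
  calc |radialInteraction x y| ≤ ‖x‖ * ‖x - y‖ / ‖x - y‖ ^ 2 := by
        rw [radialInteraction, abs_div, abs_of_nonneg (sq_nonneg ‖x - y‖)]
        gcongr
        exact abs_real_inner_le_norm _ _
    _ = ‖x‖ / ‖x - y‖ := by field_simp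

theorem tendsto_radialInteraction_of_tendsto_zero {α : Type*} {l : Filter α} {x y : α → E}
    {δ : ℝ} (hδ : 0 < δ) (hx : Tendsto x l (𝓝 0)) (hy : ∀ᶠ t in l, δ ≤ ‖y t‖) :
    Tendsto (fun t => radialInteraction (x t) (y t)) l (𝓝 0) := by
  have hsmall : ∀ᶠ t in l, ‖x t‖ ≤ δ / 2 :=
    (hx.norm.eventually (ge_mem_nhds (by norm_num [hδ] : ‖(0 : E)‖ < δ / 2)))
  refine squeeze_zero_norm' ?_ (by simpa using hx.norm.const_mul (2 / δ))
  filter_upwards [hsmall, hy] with t hxt hyt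
  have hsep : δ / 2 ≤ ‖x t - y t‖ := by
    linarith [norm_sub_norm_le (y t) (x t), norm_sub_rev (y t) (x t)]
  calc ‖radialInteraction (x t) (y t)‖ ≤ ‖x t‖ / ‖x t - y t‖ := abs_radialInteraction_le _ _
    _ ≤ ‖x t‖ / (δ / 2) := by gcongr
    _ = 2 / δ * ‖x t‖ := by field_simp

theorem HasDerivAt.norm_sq_div_one_add_norm_sq {f : ℝ → E} {f' : E} {t : ℝ}
    (hf : HasDerivAt f f' t) :
    HasDerivAt (fun s => ‖f s‖ ^ 2 / (1 + ‖f s‖ ^ 2)) (2 * ⟪f t, f'⟫ / (1 + ‖f t‖ ^ 2) ^ 2) t := by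
  refine (hf.norm_sq.fun_div (hf.norm_sq.const_add 1) (by positivity)).congr_deriv ?_
  ring

end RadialInteraction

section DoubleSums

variable {ι : Type*} [DecidableEq ι]

theorem Finset.sum_sum_erase_comm {M : Type*} [AddCommMonoid M] (s : Finset ι)
    (g : ι → ι → M) :
    ∑ i ∈ s, ∑ j ∈ s.erase i, g i j = ∑ i ∈ s, ∑ j ∈ s.erase i, g j i :=
  Finset.sum_comm' fun i j => by simp only [Finset.mem_erase]; tauto

theorem Finset.sum_sum_erase_mul {R : Type*} [CommRing R] (s : Finset ι) (a : ι → R) :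
    ∑ i ∈ s, ∑ j ∈ s.erase i, a i * a j = (∑ i ∈ s, a i) ^ 2 - ∑ i ∈ s, a i ^ 2 := by
  have h : ∀ i ∈ s, ∑ j ∈ s.erase i, a i * a j = a i * ∑ j ∈ s, a j - a i ^ 2 := fun i hi => by
    rw [← Finset.mul_sum, Finset.sum_erase_eq_sub hi]; ring
  rw [Finset.sum_congr rfl h, Finset.sum_sub_distrib, ← Finset.sum_mul, sq]

end DoubleSums

section Vortices

variable {N : ℕ} (d : Fin N → ℤ) (q : Fin N → E2)

theorem two_inner_pvVel_div_sq (i : Fin N) :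
    2 * ⟪q i, pvVel d q i⟫ / (1 + ‖q i‖ ^ 2) ^ 2 =
      ‖q i‖ ^ 2 / (1 + ‖q i‖ ^ 2) +
        ∑ j ∈ univ.erase i, (d i * d j : ℝ) * radialInteraction (q i) (q j) := by
  simp only [pvVel, radialInteraction, real_inner_smul_right, inner_add_right, inner_sum,
    real_inner_self_eq_norm_sq, Finset.mul_sum]
  field_simp

variable {d q} {I : Finset (Fin N)}

theorem sum_sum_erase_radialInteraction (hd : ∀ i ∈ I, d i = 1 ∨ d i = -1)
    (hq : ∀ i ∈ I, ∀ j ∈ I, i ≠ j → q i ≠ q j) :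
    ∑ i ∈ I, ∑ j ∈ I.erase i, (d i * d j : ℝ) * radialInteraction (q i) (q j) =
      (((∑ i ∈ I, d i) ^ 2 - #I : ℤ) : ℝ) / 2 := by
  have hpair : ∀ i ∈ I, ∀ j ∈ I.erase i,
      (d i * d j : ℝ) * radialInteraction (q i) (q j) +
        (d j * d i : ℝ) * radialInteraction (q j) (q i) = d i * d j := by
    intro i hi j hj
    obtain ⟨hji, hj⟩ := Finset.mem_erase.1 hj
    rw [mul_comm (d j : ℝ), ← mul_add,
      radialInteraction_add_radialInteraction (hq i hi j hj (Ne.symm hji)), mul_one]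
  have hsq : ∑ i ∈ I, (d i : ℝ) ^ 2 = #I := by
    rw [Finset.sum_congr rfl fun i hi => show (d i : ℝ) ^ 2 = 1 by
      rcases hd i hi with h | h <;> simp [h]]
    simp
  have hdouble := Finset.sum_sum_erase_comm I
    fun i j => (d i * d j : ℝ) * radialInteraction (q i) (q j)
  have hmul := Finset.sum_sum_erase_mul I fun i => (d i : ℝ)
  rw [← Finset.sum_congr rfl fun i hi => Finset.sum_congr rfl (hpair i hi)] at hmul
  simp only [Finset.sum_add_distrib, ← hdouble, hsq] at hmul
  push_cast
  linarith

theorem sum_two_inner_pvVel_div_sq (hd : ∀ i ∈ I, d i = 1 ∨ d i = -1)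
    (hq : ∀ i ∈ I, ∀ j ∈ I, i ≠ j → q i ≠ q j) :
    ∑ i ∈ I, 2 * ⟪q i, pvVel d q i⟫ / (1 + ‖q i‖ ^ 2) ^ 2 =
      ∑ i ∈ I, ‖q i‖ ^ 2 / (1 + ‖q i‖ ^ 2) + (((∑ i ∈ I, d i) ^ 2 - #I : ℤ) : ℝ) / 2 +
        ∑ i ∈ I, ∑ j ∈ Iᶜ, (d i * d j : ℝ) * radialInteraction (q i) (q j) := by
  have hsplit : ∀ i ∈ I, ∑ j ∈ univ.erase i, (d i * d j : ℝ) * radialInteraction (q i) (q j) =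
      ∑ j ∈ I.erase i, (d i * d j : ℝ) * radialInteraction (q i) (q j) +
        ∑ j ∈ Iᶜ, (d i * d j : ℝ) * radialInteraction (q i) (q j) := by
    intro i hi
    rw [Finset.sum_erase_eq_sub (Finset.mem_univ i), Finset.sum_erase_eq_sub hi,
      ← Finset.sum_add_sum_compl I]
    ring
  simp only [two_inner_pvVel_div_sq, Finset.sum_add_distrib]
  rw [Finset.sum_congr rfl hsplit, Finset.sum_add_distrib, sum_sum_erase_radialInteraction hd hq]
  ring

end Vortices

theorem not_tendsto_nhds_zero_of_nonneg_of_deriv_pos {f f' : ℝ → ℝ} {T : ℝ}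
    (hf : ∀ᶠ t in 𝓝[<] T, HasDerivAt f (f' t) t ∧ 0 < f' t ∧ 0 ≤ f t) :
    ¬ Tendsto f (𝓝[<] T) (𝓝 0) := by
  intro hlim
  obtain ⟨a, ha : a < T, hsub⟩ := mem_nhdsLT_iff_exists_Ioo_subset.1 hf
  have hmono : StrictMonoOn f (Set.Ioo a T) := by
    refine strictMonoOn_of_deriv_pos (convex_Ioo a T)
      (fun t ht => (hsub ht).1.continuousAt.continuousWithinAt) fun t ht => ?_
    rw [interior_Ioo] at ht
    rw [(hsub ht).1.deriv]
    exact (hsub ht).2.1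
  have hu : (a + T) / 2 ∈ Set.Ioo a T := ⟨by linarith, by linarith⟩
  have hs : (3 * a + T) / 4 ∈ Set.Ioo a T := ⟨by linarith, by linarith⟩
  have hfu : f ((a + T) / 2) ≤ 0 := by
    refine ge_of_tendsto hlim ?_
    filter_upwards [Ioo_mem_nhdsLT hu.2] with t ht
    exact hmono.monotoneOn hu ⟨hu.1.trans ht.1, ht.2⟩ ht.1.le
  have hfs := hmono hs hu (by linarith)
  linarith [(hsub hs).2.2]

theorem sq_sum_le_card_of_collision {N : ℕ} {T₁ : ℝ} (hT₁ : 0 < T₁)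
    {p : Fin N → ℝ → E2} {d : Fin N → ℤ}
    (hd : ∀ i, d i = 1 ∨ d i = -1)
    (hdist : ∀ t ∈ Set.Ico (0 : ℝ) T₁, ∀ i j, i ≠ j → p i t ≠ p j t)
    (hode : ∀ t ∈ Set.Ico (0 : ℝ) T₁, ∀ i,
      HasDerivWithinAt (p i) (pvVel d (fun j => p j t) i) (Set.Ico (0 : ℝ) T₁) t)
    {I : Finset (Fin N)}
    (hcollide : ∀ i ∈ I, Tendsto (p i) (𝓝[<] T₁) (𝓝 0))
    {δ : ℝ} (hδ : 0 < δ)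
    (haway : ∀ j ∉ I, ∀ t ∈ Set.Ico (0 : ℝ) T₁, δ ≤ ‖p j t‖) :
    (∑ i ∈ I, d i) ^ 2 ≤ (#I : ℤ) := by
  by_contra! hcard
  set S : ℝ := (((∑ i ∈ I, d i) ^ 2 - #I : ℤ) : ℝ) / 2
  have hS : 0 < S := by
    have : (0 : ℤ) < (∑ i ∈ I, d i) ^ 2 - #I := by linarith
    positivity
  set Q : ℝ → ℝ := fun t => ∑ i ∈ I, ‖p i t‖ ^ 2 / (1 + ‖p i t‖ ^ 2)
  set C : ℝ → ℝ := fun t =>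
    ∑ i ∈ I, ∑ j ∈ Iᶜ, (d i * d j : ℝ) * radialInteraction (p i t) (p j t)
  have hlife : ∀ᶠ t in 𝓝[<] T₁, t ∈ Set.Ioo 0 T₁ := Ioo_mem_nhdsLT hT₁
  have hQ : Tendsto Q (𝓝[<] T₁) (𝓝 0) := by
    have hcont : Continuous fun x : E2 => ‖x‖ ^ 2 / (1 + ‖x‖ ^ 2) :=
      (continuous_norm.pow 2).div (continuous_const.add (continuous_norm.pow 2))
        fun x => by positivity
    simpa using tendsto_finsetSum I fun i hi => (hcont.tendsto 0).comp (hcollide i hi)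
  have hC : Tendsto C (𝓝[<] T₁) (𝓝 0) := by
    have hfar : ∀ j ∉ I, ∀ᶠ t in 𝓝[<] T₁, δ ≤ ‖p j t‖ := fun j hj =>
      hlife.mono fun t ht => haway j hj t (Set.Ioo_subset_Ico_self ht)
    simpa using tendsto_finsetSum I fun i hi => tendsto_finsetSum Iᶜ fun j hj =>
      (tendsto_radialInteraction_of_tendsto_zero hδ (hcollide i hi)
        (hfar j (Finset.mem_compl.1 hj))).const_mul (d i * d j : ℝ)
  have hderiv : ∀ t ∈ Set.Ioo 0 T₁, HasDerivAt Q (Q t + S + C t) t := by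
    intro t ht
    have hp : ∀ i, HasDerivAt (p i) (pvVel d (fun j => p j t) i) t := fun i =>
      (hode t (Set.Ioo_subset_Ico_self ht) i).hasDerivAt (Ico_mem_nhds ht.1 ht.2)
    rw [← sum_two_inner_pvVel_div_sq (fun i _ => hd i) fun i _ j _ => hdist t
      (Set.Ioo_subset_Ico_self ht) i j]
    exact HasDerivAt.fun_sum fun i _ => (hp i).norm_sq_div_one_add_norm_sq
  have hrate : Tendsto (fun t => Q t + S + C t) (𝓝[<] T₁) (𝓝 S) := by
    simpa using (hQ.add_const S).add hC
  refine not_tendsto_nhds_zero_of_nonneg_of_deriv_pos (f' := fun t => Q t + S + C t) ?_ hQ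
  filter_upwards [hlife, hrate.eventually_const_lt hS] with t ht hpos
  exact ⟨hderiv t ht, hpos, Finset.sum_nonneg fun i _ => by positivity⟩

section Degrees

variable {ι : Type*} {I : Finset ι} {d : ι → ℤ}

theorem sum_eq_card_filter_sub_card_filter (hd : ∀ i ∈ I, d i = 1 ∨ d i = -1) :
    ∑ i ∈ I, d i = (I.filter fun i => d i = 1).card - (I.filter fun i => d i = -1).card := by
  rw [Finset.card_filter, Finset.card_filter]
  push_cast
  rw [← Finset.sum_sub_distrib]
  exact Finset.sum_congr rfl fun i hi => by rcases hd i hi with h | h <;> simp [h]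

theorem card_eq_card_filter_add_card_filter (hd : ∀ i ∈ I, d i = 1 ∨ d i = -1) :
    #I = (I.filter fun i => d i = 1).card + (I.filter fun i => d i = -1).card := by
  rw [Finset.card_filter, Finset.card_filter, ← Finset.sum_add_distrib, Finset.card_eq_sum_ones]
  exact Finset.sum_congr rfl fun i hi => by rcases hd i hi with h | h <;> simp [h]

theorem exists_mem_ne_of_sq_sum_le_card {c : ℤ} (hc : c ^ 2 = 1)
    (hsq : (∑ i ∈ I, d i) ^ 2 ≤ #I) (hI : 2 ≤ #I) : ∃ i ∈ I, d i ≠ c := by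
  by_contra! hconst
  rw [Finset.sum_congr rfl hconst, Finset.sum_const, nsmul_eq_mul, mul_pow, hc, mul_one] at hsq
  have hI' : (2 : ℤ) ≤ #I := by exact_mod_cast hI
  nlinarith

end Degrees

theorem two_mul_choose_two_add_choose_two_sub_mul (k l : ℕ) :
    2 * ((k.choose 2 : ℤ) + ((k + l).choose 2 : ℤ) - k * (k + l : ℤ)) = l ^ 2 - (2 * k + l) := by
  qify
  rw [Nat.cast_choose_two, Nat.cast_choose_two]
  push_cast
  ring

theorem choose_two_add_choose_two_sub_mul_lt_one {a b k l : ℕ} (hk : k = min a b)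
    (hl : (l : ℤ) = |(a : ℤ) - b|) (hab : ((a : ℤ) - b) ^ 2 ≤ a + b) :
    (k.choose 2 : ℤ) + ((k + l).choose 2 : ℤ) - k * (k + l : ℤ) < 1 := by
  have hl2 : (l : ℤ) ^ 2 = ((a : ℤ) - b) ^ 2 := by rw [hl, sq_abs]
  have hkl : 2 * (k : ℤ) + l = a + b := by
    subst hk
    rcases abs_cases ((a : ℤ) - b) with ⟨h, _⟩ | ⟨h, _⟩ <;> omega
  linarith [two_mul_choose_two_add_choose_two_sub_mul k l]

theorem colliding_degrees_constraint_general
    (n : ℕ) (T₁ : ℝ) (hT₁ : 0 < T₁)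
    (p : Fin (2 * n) → ℝ → E2) (d : Fin (2 * n) → ℤ)
    (hd : ∀ i, d i = 1 ∨ d i = -1)
    (hdist : ∀ t ∈ Set.Ico (0 : ℝ) T₁, ∀ i j, i ≠ j → p i t ≠ p j t)
    (hode : ∀ t ∈ Set.Ico (0 : ℝ) T₁, ∀ i,
      HasDerivWithinAt (p i) (pvVel d (fun j => p j t) i) (Set.Ico (0 : ℝ) T₁) t)
    (I : Finset (Fin (2 * n))) (hI : 2 ≤ I.card)
    (hcollide : ∀ i ∈ I,
      Filter.Tendsto (p i) (nhdsWithin T₁ (Set.Iio T₁)) (nhds 0))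
    (δ : ℝ) (hδ : 0 < δ)
    (haway : ∀ j ∉ I, ∀ t ∈ Set.Ico (0 : ℝ) T₁, δ ≤ ‖p j t‖)
    (l : ℕ) (hl : (l : ℤ) = |∑ i ∈ I, d i|)
    (k : ℕ) (hk : k = min (I.filter fun i => d i = 1).card (I.filter fun i => d i = -1).card) :
    (k.choose 2 : ℤ) + ((k + l).choose 2 : ℤ) - (k : ℤ) * (k + l : ℤ) < 1 ∧
    (∃ i ∈ I, d i = 1) ∧ (∃ i ∈ I, d i = -1) := by
  have hsq : (∑ i ∈ I, d i) ^ 2 ≤ #I :=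
    sq_sum_le_card_of_collision hT₁ hd hdist hode hcollide hδ haway
  have hsum := sum_eq_card_filter_sub_card_filter fun i (_ : i ∈ I) => hd i
  have hcard := card_eq_card_filter_add_card_filter fun i (_ : i ∈ I) => hd i
  refine ⟨choose_two_add_choose_two_sub_mul_lt_one hk (hsum ▸ hl) ?_, ?_, ?_⟩
  · rw [← hsum]
    exact_mod_cast hcard ▸ hsq
  · obtain ⟨i, hi, hne⟩ := exists_mem_ne_of_sq_sum_le_card (by norm_num : (-1 : ℤ) ^ 2 = 1) hsq hI
    exact ⟨i, hi, (hd i).resolve_right hne⟩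
  · obtain ⟨i, hi, hne⟩ := exists_mem_ne_of_sq_sum_le_card (one_pow 2) hsq hI
    exact ⟨i, hi, (hd i).resolve_left hne⟩

/-- At a collision of the planar point-vortex gradient flow with nonzero total colliding
degree `l`, if `k` is the number of colliding vortices of the minority sign, then
`C(k,2) + C(k+l,2) - k(k+l) < 1`; in particular the colliding vortices cannot all have
degrees of one sign. -/
theorem colliding_degrees_constraint
    (n : ℕ) (hn : 1 ≤ n) (T₁ : ℝ) (hT₁ : 0 < T₁)
    (p : Fin (2 * n) → ℝ → E2) (d : Fin (2 * n) → ℤ)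
    (hd : ∀ i, d i = 1 ∨ d i = -1) (hdsum : ∑ i, d i = 0)
    (hdist : ∀ t ∈ Set.Ico (0 : ℝ) T₁, ∀ i j, i ≠ j → p i t ≠ p j t)
    (hode : ∀ t ∈ Set.Ico (0 : ℝ) T₁, ∀ i,
      HasDerivWithinAt (p i) (pvVel d (fun j => p j t) i) (Set.Ico (0 : ℝ) T₁) t)
    (I : Finset (Fin (2 * n))) (hI : 2 ≤ I.card)
    (hcollide : ∀ i ∈ I,
      Filter.Tendsto (p i) (nhdsWithin T₁ (Set.Iio T₁)) (nhds 0))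
    (δ : ℝ) (hδ : 0 < δ)
    (haway : ∀ j ∉ I, ∀ t ∈ Set.Ico (0 : ℝ) T₁, δ ≤ ‖p j t‖)
    (hne : (∑ i ∈ I, d i) ≠ 0)
    (l : ℕ) (hl : (l : ℤ) = |∑ i ∈ I, d i|)
    (k : ℕ) (hk : k = min (I.filter fun i => d i = 1).card (I.filter fun i => d i = -1).card) :
    (k.choose 2 : ℤ) + ((k + l).choose 2 : ℤ) - (k : ℤ) * (k + l : ℤ) < 1 ∧
    (∃ i ∈ I, d i = 1) ∧ (∃ i ∈ I, d i = -1) :=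
  colliding_degrees_constraint_general n T₁ hT₁ p d hd hdist hode I hI hcollide δ hδ haway l hl k hk
end
end
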